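/- arXiv:2308.09625 — 4 statements merged into one kernel-verified Lean document; each statement's English description precedes it below -/
import Mathlib

section
/- Let G be a d-weighted reachability game, let v be a vertex, let x ∈ ℕ^d be a cost profile with all components finite, and let ≲ be either the componentwise order ≤_C or the lexicographic order ≤_L on (ℕ ∪ {∞})^d. If there exists a strategy σ₁ of Player 1 from v such that Cost(Out(σ₁,σ₂,v)) ≲ x for every strategy σ₂ of Player 2, then there exists a strategy σ₁' of Player 1 from v such that for every strategy σ₂ of Player 2: (i) Cost(Out(σ₁',σ₂,v)) ≲ x and (ii) the play Out(σ₁',σ₂,v) visits the target set F, with LengthF(Out(σ₁',σ₂,v)) ≤ |V|. -/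
open Classical

/-- Cost profiles: `d`-tuples over `ℕ ∪ {∞}`. -/
abbrev CostP (d : ℕ) := Fin d → ℕ∞

/-- The componentwise order `≤_C` on `(ℕ ∪ {∞})^d`. -/
def leC {d : ℕ} (x y : CostP d) : Prop := x ≤ y

/-- The strict lexicographic order `<_L` on `(ℕ ∪ {∞})^d`. -/
def ltL {d : ℕ} (x y : CostP d) : Prop :=
  ∃ i, (∀ j, j < i → x j = y j) ∧ x i < y i

/-- The lexicographic order `≤_L` on `(ℕ ∪ {∞})^d`. -/
def leL {d : ℕ} (x y : CostP d) : Prop := x = y ∨ ltL x y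

/-- Minimal elements of `X` with respect to an order `le`. -/
def minimalSet {α : Type*} (le : α → α → Prop) (X : Set α) : Set α :=
  { x | x ∈ X ∧ ∀ y ∈ X, le y x → y = x }

/-- Upward closure of `X` with respect to an order `le`. -/
def upSet {α : Type*} (le : α → α → Prop) (X : Set α) : Set α :=
  { z | ∃ x ∈ X, le x z }

/-- Translation of a set of cost profiles by (the cast of) a tuple `c ∈ ℕ^d`. -/
def addW {d : ℕ} (X : Set (CostP d)) (c : Fin d → ℕ) : Set (CostP d) :=
  { z | ∃ x ∈ X, z = x + fun i => (c i : ℕ∞) }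

/-- A `d`-weighted reachability game: a finite directed graph whose vertices are
partitioned into Player 1's vertices `V1` and Player 2's vertices (the complement),
an edge relation `E` such that every vertex has a successor, a `d`-dimensional
weight function `w` on edges, and a target set `F`. -/
structure MWGame (V : Type*) (d : ℕ) where
  V1 : Set V
  E : V → V → Prop
  succ_nonempty : ∀ v, ∃ v', E v v'
  w : V → V → Fin d → ℕ
  F : Set V

namespace MWGame

variable {V : Type*} {d : ℕ}

/-- Strategies of Player 1: a choice of successor for every history
(represented as the pair (strict past, current vertex)), valid at Player 1's vertices. -/
def Strat1 (G : MWGame V d) :=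
  { σ : List V → V → V // ∀ h u, u ∈ G.V1 → G.E u (σ h u) }

/-- Strategies of Player 2. -/
def Strat2 (G : MWGame V d) :=
  { σ : List V → V → V // ∀ h u, u ∉ G.V1 → G.E u (σ h u) }

/-- The pair (strict past, current vertex) after `n` steps of the play consistent
with `σ₁` and `σ₂` from `v`. -/
noncomputable def outAux (G : MWGame V d) (σ₁ : G.Strat1) (σ₂ : G.Strat2) (v : V) :
    ℕ → List V × V
  | 0 => ([], v)
  | n + 1 =>
    let q := G.outAux σ₁ σ₂ v n
    (q.1 ++ [q.2], if q.2 ∈ G.V1 then σ₁.1 q.1 q.2 else σ₂.1 q.1 q.2)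

/-- `Out(σ₁,σ₂,v)`: the unique play from `v` consistent with `σ₁` and `σ₂`. -/
noncomputable def out (G : MWGame V d) (σ₁ : G.Strat1) (σ₂ : G.Strat2) (v : V) (n : ℕ) : V :=
  (G.outAux σ₁ σ₂ v n).2

/-- The cost profile of a play: the componentwise sum of weights up to the first
visit of the target set, and `(∞,…,∞)` if the target set is never visited. -/
noncomputable def cost (G : MWGame V d) (ρ : ℕ → V) : CostP d :=
  if h : ∃ ℓ, ρ ℓ ∈ G.F then
    fun i => ∑ n ∈ Finset.range (Nat.find h), (G.w (ρ n) (ρ (n + 1)) i : ℕ∞)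
  else ⊤

/-- `Ensure^k(v)`: cost profiles that Player 1 can ensure from `v` within `k` steps. -/
def EnsureK (G : MWGame V d) (le : CostP d → CostP d → Prop) (k : ℕ) (v : V) :
    Set (CostP d) :=
  { x | ∃ σ₁ : G.Strat1, ∀ σ₂ : G.Strat2,
      le (G.cost (G.out σ₁ σ₂ v)) x ∧
      ∀ h : (∃ ℓ, G.out σ₁ σ₂ v ℓ ∈ G.F), Nat.find h ≤ k }

/-- `Ensure(v)`: cost profiles that Player 1 can ensure from `v`. -/
def Ensure (G : MWGame V d) (le : CostP d → CostP d → Prop) (v : V) : Set (CostP d) :=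
  { x | ∃ σ₁ : G.Strat1, ∀ σ₂ : G.Strat2, le (G.cost (G.out σ₁ σ₂ v)) x }

/-- The sets `Iᵏ(v)` computed by the fixpoint algorithm, relative to the order `le`. -/
noncomputable def Iset (G : MWGame V d) (le : CostP d → CostP d → Prop) :
    ℕ → V → Set (CostP d)
  | 0, v => if v ∈ G.F then {0} else {⊤}
  | k + 1, v =>
    if v ∈ G.F then {0}
    else if v ∈ G.V1 then
      minimalSet le (⋃ v' ∈ { u | G.E v u }, addW (upSet le (G.Iset le k v')) (G.w v v'))
    else
      minimalSet le (⋂ v' ∈ { u | G.E v u }, addW (upSet le (G.Iset le k v')) (G.w v v'))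

end MWGame


/-!
If `σ₁` ensures a finite cost profile, every play consistent with `σ₁` reaches `F`. Player 1
improves `σ₁` by shortcutting cycles: he maintains a virtual history consistent with `σ₁`, and
whenever the real play arrives at a vertex `u` he replaces the virtual history by a maximal
`σ₁`-consistent extension that ends in `u` again without having visited `F`; then he plays what
`σ₁` plays after it. Maximal extensions exist because `σ₁` is winning, so these extensions cannot
grow forever. Every real move is also a move of the virtual play, so the real cost is a subsum of
the cost of a play consistent with `σ₁`. A vertex repeated before `F` is reached would contradict
the maximality chosen at its first visit, so `F` is reached within `|V|` steps.
-/

theorem leL_iff_toLex_le {d : ℕ} {x y : CostP d} : leL x y ↔ toLex x ≤ toLex y := by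
  rw [le_iff_eq_or_lt, leL, toLex_inj]
  rfl

theorem le_of_leC_of_le {d : ℕ} {le : CostP d → CostP d → Prop} (hle : le = leC ∨ le = leL)
    {x y z : CostP d} (hxy : leC x y) (hyz : le y z) : le x z := by
  rcases hle with rfl | rfl
  · exact le_trans hxy hyz
  · exact leL_iff_toLex_le.2 ((Pi.toLex_monotone hxy).trans (leL_iff_toLex_le.1 hyz))

theorem ne_top_of_le_coe {d : ℕ} (hd : 1 ≤ d) {le : CostP d → CostP d → Prop}
    (hle : le = leC ∨ le = leL) {y : CostP d} {x : Fin d → ℕ} (h : le y fun i => (x i : ℕ∞)) :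
    y ≠ ⊤ := by
  rintro rfl
  let i₀ : Fin d := ⟨0, hd⟩
  rcases hle with rfl | rfl
  · exact ENat.natCast_ne_top _ (top_le_iff.1 (h i₀))
  · rcases h with h | ⟨i, -, hi⟩
    · exact ENat.top_ne_natCast _ (congrFun h i₀)
    · exact not_top_lt hi

theorem Finset.sum_range_comp_le_sum_range {M : Type*} [AddCommMonoid M] [PartialOrder M]
    [IsOrderedAddMonoid M] [CanonicallyOrderedAdd M] (f : ℕ → M) {t : ℕ → ℕ} {b : ℕ}
    (ht : ∀ n < b, t n < t (n + 1)) :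
    ∑ n ∈ range b, f (t n) ≤ ∑ k ∈ range (t b), f k := by
  induction b with
  | zero => exact zero_le
  | succ b ih =>
    calc ∑ n ∈ range (b + 1), f (t n)
        = ∑ n ∈ range b, f (t n) + f (t b) := sum_range_succ _ _
      _ ≤ ∑ k ∈ range (t b), f k + f (t b) :=
          add_le_add (ih fun n hn => ht n (by omega)) le_rfl
      _ = ∑ k ∈ range (t b + 1), f k := (sum_range_succ f (t b)).symm
      _ ≤ ∑ k ∈ range (t (b + 1)), f k :=
          sum_le_sum_of_subset (range_subset_range.2 (ht b b.lt_succ_self))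

namespace MWGame

section Hist

variable {α : Type*} {ρ ρ' : ℕ → α} {m n : ℕ} {l : List α} {a : α}

def hist (ρ : ℕ → α) (n : ℕ) : List α := (List.range n).map ρ

@[simp] theorem length_hist : (hist ρ n).length = n := by simp [hist]

theorem hist_succ : hist ρ (n + 1) = hist ρ n ++ [ρ n] := by simp [hist, List.range_succ]

theorem mem_hist : a ∈ hist ρ n ↔ ∃ k < n, ρ k = a := by simp [hist]

theorem hist_eq_hist_iff : hist ρ n = hist ρ' n ↔ ∀ k < n, ρ k = ρ' k := by
  simp [hist, List.map_inj_left]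

theorem hist_succ_eq_append_singleton : hist ρ (n + 1) = l ++ [a] ↔ hist ρ n = l ∧ ρ n = a := by
  simp [hist_succ]

theorem take_hist (h : m ≤ n) : (hist ρ n).take m = hist ρ m := by
  simp [hist, ← List.map_take, List.take_range, h]

theorem hist_prefix_hist (h : m ≤ n) : hist ρ m <+: hist ρ n :=
  take_hist h ▸ List.take_prefix _ _

theorem hist_length_eq_of_prefix (h : l <+: hist ρ n) : hist ρ l.length = l := by
  rw [← take_hist (by simpa using h.length_le)]
  exact (List.prefix_iff_eq_take.1 h).symm

theorem prefix_of_chain {c : ℕ → List α} {b : ℕ} (hc : ∀ k < b, c k <+: c (k + 1)) (hmn : m ≤ n)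
    (hn : n ≤ b) : c m <+: c n := by
  induction n, hmn using Nat.le_induction with
  | base => exact List.prefix_refl _
  | succ n _ ih => exact (ih (by omega)).trans (hc n (by omega))

theorem exists_hist_eq_of_chain {c : ℕ → List α} (hc : ∀ n, c n <+: c (n + 1))
    (hlen : ∀ n, n < (c n).length) : ∃ ρ : ℕ → α, ∀ n, hist ρ (c n).length = c n := by
  have hmono : ∀ {m n}, m ≤ n → c m <+: c n := fun hmn =>
    prefix_of_chain (fun k _ => hc k) hmn le_rfl
  refine ⟨fun k => (c k)[k]'(hlen k), fun n => List.ext_getElem (by simp) fun k hk _ => ?_⟩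
  simp only [hist, List.getElem_map, List.getElem_range]
  rcases le_total k n with h | h
  · exact (hmono h).getElem (hlen k)
  · exact ((hmono h).getElem (by simpa using hk)).symm

end Hist

variable {V : Type*} {d : ℕ} (G : MWGame V d)

section Plays

variable {G} {σ₁ : G.Strat1} {σ₂ : G.Strat2} {v : V} {ρ ρ' : ℕ → V} {n : ℕ}

theorem outAux_fst (σ₁ : G.Strat1) (σ₂ : G.Strat2) (v : V) (n : ℕ) :
    (G.outAux σ₁ σ₂ v n).1 = hist (G.out σ₁ σ₂ v) n := by
  induction n with
  | zero => rfl
  | succ n ih => rw [hist_succ, ← ih]; rfl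

theorem out_succ (σ₁ : G.Strat1) (σ₂ : G.Strat2) (v : V) (n : ℕ) :
    G.out σ₁ σ₂ v (n + 1) =
      if G.out σ₁ σ₂ v n ∈ G.V1 then σ₁.1 (hist (G.out σ₁ σ₂ v) n) (G.out σ₁ σ₂ v n)
      else σ₂.1 (hist (G.out σ₁ σ₂ v) n) (G.out σ₁ σ₂ v n) := by
  rw [← outAux_fst]
  rfl

variable (G) in
def Step (σ₁ : G.Strat1) (h : List V) (u u' : V) : Prop :=
  G.E u u' ∧ (u ∈ G.V1 → u' = σ₁.1 h u)

variable (G) in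
def ConsistentUpTo (σ₁ : G.Strat1) (v : V) (ρ : ℕ → V) (n : ℕ) : Prop :=
  ρ 0 = v ∧ ∀ k < n, G.Step σ₁ (hist ρ k) (ρ k) (ρ (k + 1))

theorem step_out (σ₁ : G.Strat1) (σ₂ : G.Strat2) (v : V) (n : ℕ) :
    G.Step σ₁ (hist (G.out σ₁ σ₂ v) n) (G.out σ₁ σ₂ v n) (G.out σ₁ σ₂ v (n + 1)) := by
  rw [Step, out_succ]
  by_cases h : G.out σ₁ σ₂ v n ∈ G.V1
  · rw [if_pos h]
    exact ⟨σ₁.2 _ _ h, fun _ => rfl⟩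
  · rw [if_neg h]
    exact ⟨σ₂.2 _ _ h, fun h' => absurd h' h⟩

theorem consistentUpTo_out (σ₁ : G.Strat1) (σ₂ : G.Strat2) (v : V) (n : ℕ) :
    G.ConsistentUpTo σ₁ v (G.out σ₁ σ₂ v) n :=
  ⟨rfl, fun k _ => step_out σ₁ σ₂ v k⟩

theorem ConsistentUpTo.mono (h : G.ConsistentUpTo σ₁ v ρ (n + 1)) : G.ConsistentUpTo σ₁ v ρ n :=
  ⟨h.1, fun k hk => h.2 k (by omega)⟩

theorem ConsistentUpTo.snoc (h : G.ConsistentUpTo σ₁ v ρ n)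
    (hs : G.Step σ₁ (hist ρ n) (ρ n) (ρ (n + 1))) : G.ConsistentUpTo σ₁ v ρ (n + 1) :=
  ⟨h.1, fun k hk => (Nat.lt_succ_iff_lt_or_eq.1 hk).elim (h.2 k) fun e => e ▸ hs⟩

theorem ConsistentUpTo.congr (h : G.ConsistentUpTo σ₁ v ρ n)
    (hρ : hist ρ (n + 1) = hist ρ' (n + 1)) : G.ConsistentUpTo σ₁ v ρ' n := by
  have hag := hist_eq_hist_iff.1 hρ
  refine ⟨(hag 0 (by omega)).symm.trans h.1, fun k hk => ?_⟩
  rw [← hist_eq_hist_iff.2 fun j hj => hag j (by omega), ← hag k (by omega),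
    ← hag (k + 1) (by omega)]
  exact h.2 k hk

variable (G) in
noncomputable def follow (ρ : ℕ → V) : G.Strat2 :=
  ⟨fun l u => if G.E u (ρ (l.length + 1)) then ρ (l.length + 1) else (G.succ_nonempty u).choose,
    fun l u _ => by
      dsimp only
      split_ifs with h
      exacts [h, (G.succ_nonempty u).choose_spec]⟩

theorem hist_out_follow (h : G.ConsistentUpTo σ₁ v ρ n) :
    hist (G.out σ₁ (G.follow ρ) v) (n + 1) = hist ρ (n + 1) := by
  induction n with
  | zero => simp [hist, h.1, out, outAux]
  | succ n ih =>
    have hag := hist_eq_hist_iff.1 (ih h.mono)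
    obtain ⟨hE, hV1⟩ := h.2 n n.lt_succ_self
    rw [hist_succ, ih h.mono, hist_succ (ρ := ρ) (n := n + 1), out_succ,
      hist_eq_hist_iff.2 fun k hk => hag k (by omega), hag n n.lt_succ_self]
    split_ifs with hn
    · rw [← hV1 hn]
    · simp [follow, hE]

variable (G) in
def IsHist (σ₁ : G.Strat1) (v : V) (l : List V) : Prop :=
  ∃ σ₂ : G.Strat2, hist (G.out σ₁ σ₂ v) l.length = l

theorem IsHist.of_prefix {l l' : List V} (h : G.IsHist σ₁ v l) (h' : l' <+: l) :
    G.IsHist σ₁ v l' := by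
  obtain ⟨σ₂, hσ₂⟩ := h
  exact ⟨σ₂, hist_length_eq_of_prefix (by rwa [hσ₂])⟩

theorem isHist_hist_succ_iff :
    G.IsHist σ₁ v (hist ρ (n + 1)) ↔ G.ConsistentUpTo σ₁ v ρ n := by
  refine ⟨fun ⟨σ₂, hσ₂⟩ => ?_, fun h => ⟨G.follow ρ, by rw [length_hist, hist_out_follow h]⟩⟩
  rw [length_hist] at hσ₂
  exact (consistentUpTo_out σ₁ σ₂ v n).congr hσ₂

theorem IsHist.snoc {l : List V} {u u' : V} (h : G.IsHist σ₁ v (l ++ [u]))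
    (hs : G.Step σ₁ l u u') : G.IsHist σ₁ v (l ++ [u] ++ [u']) := by
  obtain ⟨σ₂, hσ₂⟩ := h
  rw [List.length_append, List.length_singleton] at hσ₂
  obtain ⟨hl, hu⟩ := hist_succ_eq_append_singleton.1 hσ₂
  set π := G.out σ₁ σ₂ v
  set ρ := Function.update π (l.length + 1) u'
  have hagree : hist π (l.length + 1) = hist ρ (l.length + 1) :=
    hist_eq_hist_iff.2 fun k hk => (Function.update_of_ne (by omega) _ _).symm
  have hρu' : ρ (l.length + 1) = u' := Function.update_self _ _ _
  have hρ : hist ρ (l.length + 1 + 1) = l ++ [u] ++ [u'] := by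
    rw [hist_succ, ← hagree, hσ₂, hρu']
  rw [← hρ, isHist_hist_succ_iff]
  refine ((consistentUpTo_out σ₁ σ₂ v l.length).congr hagree).snoc ?_
  have hag := hist_eq_hist_iff.1 hagree
  rwa [← hist_eq_hist_iff.2 fun k hk => hag k (by omega), ← hag _ l.length.lt_succ_self,
    hρu', hl, hu]

theorem exists_out_eq (h : ∀ n, G.IsHist σ₁ v (hist ρ n)) : ∃ σ₂, G.out σ₁ σ₂ v = ρ :=
  ⟨G.follow ρ, funext fun n =>
    hist_eq_hist_iff.1 (hist_out_follow (isHist_hist_succ_iff.1 (h (n + 1)))) n n.lt_succ_self⟩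

theorem cost_eq_sum {m : ℕ} (hm : ρ m ∈ G.F) (hlt : ∀ k < m, ρ k ∉ G.F) :
    G.cost ρ = fun i => ∑ k ∈ Finset.range m, (G.w (ρ k) (ρ (k + 1)) i : ℕ∞) := by
  have h : ∃ ℓ, ρ ℓ ∈ G.F := ⟨m, hm⟩
  rw [cost, dif_pos h, (Nat.find_eq_iff h).2 ⟨hm, hlt⟩]

end Plays

section Shortcut

variable (σ₁ : G.Strat1) (v : V)

def IsWinning : Prop := ∀ σ₂ : G.Strat2, ∃ ℓ, G.out σ₁ σ₂ v ℓ ∈ G.F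

def OpenHist (h : List V) (u : V) : Prop := G.IsHist σ₁ v (h ++ [u]) ∧ ∀ a ∈ h, a ∉ G.F

def IsMaxOpen (h : List V) (u : V) : Prop :=
  G.OpenHist σ₁ v h u ∧ ∀ h', h ++ [u] <+: h' → ¬G.OpenHist σ₁ v h' u

variable {G σ₁ v}

theorem openHist_nil : G.OpenHist σ₁ v [] v := ⟨⟨G.follow fun _ => v, rfl⟩, by simp⟩

theorem wellFounded_openHist_extension (hσ₁ : G.IsWinning σ₁ v) (u : V) :
    WellFounded fun h' h : List V => h ++ [u] <+: h' ∧ G.OpenHist σ₁ v h' u := by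
  rw [wellFounded_iff_isEmpty_descending_chain]
  refine ⟨fun ⟨f, hf⟩ => ?_⟩
  set c : ℕ → List V := fun n => f (n + 1) ++ [u]
  have hlen : ∀ n, n < (c n).length := by
    intro n
    induction n with
    | zero => simp [c]
    | succ n ih =>
      have := (hf (n + 1)).1.length_le
      simp only [c, List.length_append, List.length_singleton] at this ih ⊢
      omega
  obtain ⟨ρ, hρ⟩ := exists_hist_eq_of_chain
    (fun n => (hf (n + 1)).1.trans (List.prefix_append _ _)) hlen
  obtain ⟨σ₂, rfl⟩ := exists_out_eq fun n =>
    (hf n).2.1.of_prefix (hρ n ▸ hist_prefix_hist (hlen n).le)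
  obtain ⟨ℓ, hℓ⟩ := hσ₁ σ₂
  have hmem : G.out σ₁ σ₂ v ℓ ∈ hist (G.out σ₁ σ₂ v) (c ℓ).length := mem_hist.2 ⟨ℓ, hlen ℓ, rfl⟩
  rw [hρ ℓ] at hmem
  exact (hf (ℓ + 1)).2.2 _ ((hf (ℓ + 1)).1.subset hmem) hℓ

theorem exists_isMaxOpen_extension (hσ₁ : G.IsWinning σ₁ v) {h : List V} {u : V}
    (hh : G.OpenHist σ₁ v h u) : ∃ h', h ++ [u] <+: h' ++ [u] ∧ G.IsMaxOpen σ₁ v h' u := by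
  obtain ⟨h', ⟨hhh', hh'⟩, hmax⟩ := (wellFounded_openHist_extension hσ₁ u).has_min
    {h' | h ++ [u] <+: h' ++ [u] ∧ G.OpenHist σ₁ v h' u} ⟨h, List.prefix_refl _, hh⟩
  exact ⟨h', hhh', hh', fun h'' hh'h'' hh'' =>
    hmax h'' ⟨hhh'.trans (hh'h''.trans (List.prefix_append _ _)), hh''⟩ ⟨hh'h'', hh''⟩⟩

variable (σ₁ v)

noncomputable def fastForward (h : List V) (u : V) : List V :=
  if hex : ∃ h', h ++ [u] <+: h' ++ [u] ∧ G.IsMaxOpen σ₁ v h' u then hex.choose else h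

/-- The fold accumulates `virtualPast h' a ++ [a]` over the real prefixes `h' ++ [a]` of `h`. -/
noncomputable def virtualPast (h : List V) (u : V) : List V :=
  G.fastForward σ₁ v (h.foldl (fun K a => G.fastForward σ₁ v K a ++ [a]) []) u

noncomputable def shortcut : G.Strat1 :=
  ⟨fun h u => σ₁.1 (G.virtualPast σ₁ v h u) u, fun _ u hu => σ₁.2 _ u hu⟩

noncomputable def virtualPastAt (σ₂ : G.Strat2) (n : ℕ) : List V :=
  G.virtualPast σ₁ v (hist (G.out (G.shortcut σ₁ v) σ₂ v) n) (G.out (G.shortcut σ₁ v) σ₂ v n)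

variable {σ₁ v}

theorem fastForward_spec (hσ₁ : G.IsWinning σ₁ v) {h : List V} {u : V}
    (hh : G.OpenHist σ₁ v h u) :
    h ++ [u] <+: G.fastForward σ₁ v h u ++ [u] ∧ G.IsMaxOpen σ₁ v (G.fastForward σ₁ v h u) u := by
  have hex := exists_isMaxOpen_extension hσ₁ hh
  rw [fastForward, dif_pos hex]
  exact hex.choose_spec

variable (σ₂ : G.Strat2) {n : ℕ}

theorem virtualPastAt_succ :
    G.virtualPastAt σ₁ v σ₂ (n + 1) = G.fastForward σ₁ v
      (G.virtualPastAt σ₁ v σ₂ n ++ [G.out (G.shortcut σ₁ v) σ₂ v n])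
      (G.out (G.shortcut σ₁ v) σ₂ v (n + 1)) := by
  simp only [virtualPastAt, virtualPast, hist_succ, List.foldl_append, List.foldl_cons,
    List.foldl_nil]

theorem openHist_virtualPastAt_snoc
    (hmax : G.IsMaxOpen σ₁ v (G.virtualPastAt σ₁ v σ₂ n) (G.out (G.shortcut σ₁ v) σ₂ v n))
    (hn : G.out (G.shortcut σ₁ v) σ₂ v n ∉ G.F) :
    G.OpenHist σ₁ v (G.virtualPastAt σ₁ v σ₂ n ++ [G.out (G.shortcut σ₁ v) σ₂ v n])
      (G.out (G.shortcut σ₁ v) σ₂ v (n + 1)) :=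
  ⟨hmax.1.1.snoc (step_out (G.shortcut σ₁ v) σ₂ v n), fun a ha =>
    (List.mem_append.1 ha).elim (hmax.1.2 a) fun h => List.mem_singleton.1 h ▸ hn⟩

theorem isMaxOpen_virtualPastAt (hσ₁ : G.IsWinning σ₁ v)
    (hF : ∀ k < n, G.out (G.shortcut σ₁ v) σ₂ v k ∉ G.F) :
    G.IsMaxOpen σ₁ v (G.virtualPastAt σ₁ v σ₂ n) (G.out (G.shortcut σ₁ v) σ₂ v n) := by
  induction n with
  | zero => exact (fastForward_spec hσ₁ openHist_nil).2
  | succ n ih =>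
    rw [virtualPastAt_succ]
    exact (fastForward_spec hσ₁ (openHist_virtualPastAt_snoc σ₂
      (ih fun k hk => hF k (by omega)) (hF n n.lt_succ_self))).2

theorem prefix_virtualPastAt_succ (hσ₁ : G.IsWinning σ₁ v)
    (hF : ∀ k ≤ n, G.out (G.shortcut σ₁ v) σ₂ v k ∉ G.F) :
    G.virtualPastAt σ₁ v σ₂ n ++ [G.out (G.shortcut σ₁ v) σ₂ v n] ++
        [G.out (G.shortcut σ₁ v) σ₂ v (n + 1)] <+:
      G.virtualPastAt σ₁ v σ₂ (n + 1) ++ [G.out (G.shortcut σ₁ v) σ₂ v (n + 1)] := by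
  rw [virtualPastAt_succ]
  exact (fastForward_spec hσ₁ (openHist_virtualPastAt_snoc σ₂
    (isMaxOpen_virtualPastAt σ₂ hσ₁ fun k hk => hF k hk.le) (hF n le_rfl))).1

theorem exists_virtual_play (hσ₁ : G.IsWinning σ₁ v) {b : ℕ}
    (hF : ∀ k < b, G.out (G.shortcut σ₁ v) σ₂ v k ∉ G.F) :
    ∃ σ₂' : G.Strat2,
      (∀ n ≤ b, hist (G.out σ₁ σ₂' v) (G.virtualPastAt σ₁ v σ₂ n).length =
          G.virtualPastAt σ₁ v σ₂ n ∧
        G.out σ₁ σ₂' v (G.virtualPastAt σ₁ v σ₂ n).length = G.out (G.shortcut σ₁ v) σ₂ v n) ∧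
      ∀ n < b, (G.virtualPastAt σ₁ v σ₂ n).length < (G.virtualPastAt σ₁ v σ₂ (n + 1)).length ∧
        G.out σ₁ σ₂' v ((G.virtualPastAt σ₁ v σ₂ n).length + 1) =
          G.out (G.shortcut σ₁ v) σ₂ v (n + 1) := by
  set ρ := G.out (G.shortcut σ₁ v) σ₂ v
  set K : ℕ → List V := fun n => G.virtualPastAt σ₁ v σ₂ n ++ [ρ n]
  have hchain : ∀ n < b, K n ++ [ρ (n + 1)] <+: K (n + 1) := fun n hn =>
    prefix_virtualPastAt_succ σ₂ hσ₁ fun k hk => hF k (by omega)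
  have hK : ∀ {m n}, m ≤ n → n ≤ b → K m <+: K n := fun hmn hn =>
    prefix_of_chain (fun k hk => (List.prefix_append _ _).trans (hchain k hk)) hmn hn
  obtain ⟨σ₂', hσ₂'⟩ := (isMaxOpen_virtualPastAt σ₂ hσ₁ hF).1.1
  have hπ : ∀ {l}, l <+: K b → hist (G.out σ₁ σ₂' v) l.length = l := fun hl =>
    hist_length_eq_of_prefix (by rwa [hσ₂'])
  refine ⟨σ₂', fun n hn => ?_, fun n hn => ?_⟩
  · have := hπ (hK hn le_rfl)
    rw [List.length_append, List.length_singleton] at this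
    exact hist_succ_eq_append_singleton.1 this
  · have hnext := (hchain n hn).trans (hK (Nat.succ_le_of_lt hn) le_rfl)
    have hlen := (hchain n hn).length_le
    have := hπ hnext
    simp only [K, List.length_append, List.length_singleton] at this hlen
    exact ⟨by omega, (hist_succ_eq_append_singleton.1 this).2⟩

theorem out_shortcut_ne (hσ₁ : G.IsWinning σ₁ v) {a b : ℕ} (hab : a < b)
    (hF : ∀ k < b, G.out (G.shortcut σ₁ v) σ₂ v k ∉ G.F) :
    G.out (G.shortcut σ₁ v) σ₂ v a ≠ G.out (G.shortcut σ₁ v) σ₂ v b := by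
  intro hρ
  obtain ⟨σ₂', hvirt, hstep⟩ := exists_virtual_play σ₂ hσ₁ hF
  have hlt : (G.virtualPastAt σ₁ v σ₂ a).length < (G.virtualPastAt σ₁ v σ₂ b).length :=
    strictMonoOn_Iic_of_lt_succ (fun m hm => (hstep m hm).1) (Set.mem_Iic.2 hab.le)
      (Set.mem_Iic.2 le_rfl) hab
  refine (isMaxOpen_virtualPastAt σ₂ hσ₁ fun k hk => hF k (by omega)).2 _ ?_
    (hρ ▸ (isMaxOpen_virtualPastAt σ₂ hσ₁ hF).1)
  rw [← (hvirt a hab.le).1, ← (hvirt a hab.le).2, ← hist_succ, ← (hvirt b le_rfl).1]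
  exact hist_prefix_hist hlt

theorem exists_lt_card_out_shortcut_mem [Fintype V] (hσ₁ : G.IsWinning σ₁ v) :
    ∃ k < Fintype.card V, G.out (G.shortcut σ₁ v) σ₂ v k ∈ G.F := by
  by_contra! hF
  obtain ⟨i, j, hij, hρ⟩ := Fintype.exists_ne_map_eq_of_card_lt
    (fun i : Fin (Fintype.card V + 1) => G.out (G.shortcut σ₁ v) σ₂ v i) (by simp)
  rcases lt_or_gt_of_ne (Fin.val_ne_of_ne hij) with h | h
  · exact out_shortcut_ne σ₂ hσ₁ h (fun k hk => hF k (by omega)) hρ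
  · exact out_shortcut_ne σ₂ hσ₁ h (fun k hk => hF k (by omega)) hρ.symm

theorem exists_cost_out_shortcut_le (hσ₁ : G.IsWinning σ₁ v) {ℓ : ℕ}
    (hℓ : G.out (G.shortcut σ₁ v) σ₂ v ℓ ∈ G.F)
    (hlt : ∀ k < ℓ, G.out (G.shortcut σ₁ v) σ₂ v k ∉ G.F) :
    ∃ σ₂' : G.Strat2, leC (G.cost (G.out (G.shortcut σ₁ v) σ₂ v)) (G.cost (G.out σ₁ σ₂' v)) := by
  obtain ⟨σ₂', hvirt, hstep⟩ := exists_virtual_play σ₂ hσ₁ hlt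
  set ρ := G.out (G.shortcut σ₁ v) σ₂ v
  set π := G.out σ₁ σ₂' v
  set t := fun n => (G.virtualPastAt σ₁ v σ₂ n).length
  have hπ : ∀ k < t ℓ, π k ∉ G.F := fun k hk => (isMaxOpen_virtualPastAt σ₂ hσ₁ hlt).1.2 _
    ((hvirt ℓ le_rfl).1 ▸ mem_hist.2 ⟨k, hk, rfl⟩)
  refine ⟨σ₂', ?_⟩
  rw [cost_eq_sum hℓ hlt, cost_eq_sum ((hvirt ℓ le_rfl).2 ▸ hℓ) hπ]
  intro i
  calc ∑ n ∈ Finset.range ℓ, (G.w (ρ n) (ρ (n + 1)) i : ℕ∞)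
      = ∑ n ∈ Finset.range ℓ, (G.w (π (t n)) (π (t n + 1)) i : ℕ∞) :=
        Finset.sum_congr rfl fun n hn => by
          rw [(hvirt n (Finset.mem_range.1 hn).le).2, (hstep n (Finset.mem_range.1 hn)).2]
    _ ≤ ∑ k ∈ Finset.range (t ℓ), (G.w (π k) (π (k + 1)) i : ℕ∞) :=
        Finset.sum_range_comp_le_sum_range (fun k => (G.w (π k) (π (k + 1)) i : ℕ∞))
          fun n hn => (hstep n hn).1

end Shortcut

end MWGame

/-- If Player 1 has a strategy from `v` ensuring a finite cost
profile `x` (w.r.t. `≤_C` or `≤_L`), then he has one that moreover guarantees that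
the target set is reached within `|V|` steps. -/
theorem stmt0 {V : Type*} [Fintype V] {d : ℕ} (hd : 1 ≤ d) (G : MWGame V d)
    (le : CostP d → CostP d → Prop) (hle : le = leC ∨ le = leL)
    (v : V) (x : Fin d → ℕ)
    (hex : ∃ σ₁ : G.Strat1, ∀ σ₂ : G.Strat2,
      le (G.cost (G.out σ₁ σ₂ v)) (fun i => (x i : ℕ∞))) :
    ∃ σ₁' : G.Strat1, ∀ σ₂ : G.Strat2,
      le (G.cost (G.out σ₁' σ₂ v)) (fun i => (x i : ℕ∞)) ∧
      ∃ h : (∃ ℓ, G.out σ₁' σ₂ v ℓ ∈ G.F), Nat.find h ≤ Fintype.card V := by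
  obtain ⟨σ₁, hσ₁⟩ := hex
  have hwin : G.IsWinning σ₁ v := fun σ₂ => by
    by_contra hF
    exact ne_top_of_le_coe hd hle (hσ₁ σ₂) (by rw [MWGame.cost, dif_neg hF])
  refine ⟨G.shortcut σ₁ v, fun σ₂ => ?_⟩
  obtain ⟨k, hkV, hk⟩ := G.exists_lt_card_out_shortcut_mem σ₂ hwin
  have hreach : ∃ ℓ, G.out (G.shortcut σ₁ v) σ₂ v ℓ ∈ G.F := ⟨k, hk⟩
  obtain ⟨σ₂', hcost⟩ := G.exists_cost_out_shortcut_le σ₂ hwin (Nat.find_spec hreach)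
    fun _ => Nat.find_min hreach
  exact ⟨le_of_leC_of_le hle hcost (hσ₁ σ₂'), hreach, (Nat.find_min' hreach hk).trans hkV.le⟩
end

section
/- Let G be a d-weighted reachability game and let ≲ be either the componentwise order ≤_C or the lexicographic order ≤_L on (ℕ ∪ {∞})^d. For every k ∈ ℕ, every vertex v ∈ V₁ \ F and every x ∈ Iᵏ⁺¹(v), there exist a successor v' of v and x' ∈ Iᵏ(v') such that x = x' + w(v,v'). -/
open Classical

section Orders

variable {d : ℕ}

def AddWeightMono (le : CostP d → CostP d → Prop) : Prop :=
  ∀ (a b : CostP d) (c : Fin d → ℕ), le a b →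
    le (a + fun i => (c i : ℕ∞)) (b + fun i => (c i : ℕ∞))

lemma leC_refl : Std.Refl (leC (d := d)) := ⟨fun x => le_refl x⟩

lemma leL_refl : Std.Refl (leL (d := d)) := ⟨fun _ => Or.inl rfl⟩

lemma leC_addWeightMono : AddWeightMono (leC (d := d)) :=
  fun _ _ _ hab => add_le_add_left hab _

-- Finiteness of the weights matters: adding `∞` would collapse a strict inequality.
lemma leL_addWeightMono : AddWeightMono (leL (d := d)) := by
  rintro a b c (rfl | ⟨i, hfirst, hi⟩)
  · exact Or.inl rfl
  · refine Or.inr ⟨i, fun j hji => ?_, ?_⟩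
    · simp only [Pi.add_apply, hfirst j hji]
    · exact WithTop.add_lt_add_right WithTop.coe_ne_top hi

end Orders

-- If `x = y + c i` with `x' ∈ X i` below `y`, then `x' + c i` is below `x` and lies in the
-- union too, so minimality forces equality.
lemma exists_eq_add_of_mem_minimalSet_iUnion {d : ℕ} {ι : Type*}
    {le : CostP d → CostP d → Prop} (hrefl : Std.Refl le) (hmono : AddWeightMono le)
    {s : Set ι} {X : ι → Set (CostP d)} {c : ι → Fin d → ℕ} {x : CostP d}
    (hx : x ∈ minimalSet le (⋃ i ∈ s, addW (upSet le (X i)) (c i))) :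
    ∃ i ∈ s, ∃ x' ∈ X i, x = x' + fun j => (c i j : ℕ∞) := by
  obtain ⟨hxU, hxmin⟩ := hx
  obtain ⟨i, hi, y, ⟨x', hx', hx'y⟩, rfl⟩ := Set.mem_iUnion₂.mp hxU
  have hmem : (x' + fun j => (c i j : ℕ∞)) ∈ ⋃ i ∈ s, addW (upSet le (X i)) (c i) :=
    Set.mem_iUnion₂.mpr ⟨i, hi, x', ⟨x', hx', hrefl.refl x'⟩, rfl⟩
  exact ⟨i, hi, x', hx', (hxmin _ hmem (hmono _ _ _ hx'y)).symm⟩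

lemma MWGame.Iset_succ_of_mem_V1 {V : Type*} {d : ℕ} (G : MWGame V d)
    (le : CostP d → CostP d → Prop) (k : ℕ) {v : V} (hv1 : v ∈ G.V1) (hvF : v ∉ G.F) :
    G.Iset le (k + 1) v =
      minimalSet le (⋃ v' ∈ { u | G.E v u }, addW (upSet le (G.Iset le k v')) (G.w v v')) := by
  simp only [MWGame.Iset, if_neg hvF, if_pos hv1]

theorem stmt7_general {V : Type*} {d : ℕ} (G : MWGame V d)
    (le : CostP d → CostP d → Prop) (hle : le = leC ∨ le = leL)
    (k : ℕ) (v : V) (hv1 : v ∈ G.V1) (hvF : v ∉ G.F)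
    (x : CostP d) (hx : x ∈ G.Iset le (k + 1) v) :
    ∃ v', G.E v v' ∧ ∃ x' ∈ G.Iset le k v',
      x = x' + fun i => (G.w v v' i : ℕ∞) := by
  have hrefl : Std.Refl le := by
    rcases hle with rfl | rfl
    exacts [leC_refl, leL_refl]
  have hmono : AddWeightMono le := by
    rcases hle with rfl | rfl
    exacts [leC_addWeightMono, leL_addWeightMono]
  rw [G.Iset_succ_of_mem_V1 le k hv1 hvF] at hx
  exact exists_eq_add_of_mem_minimalSet_iUnion hrefl hmono hx

/-- For `v ∈ V₁ \\ F` and `x ∈ Iᵏ⁺¹(v)` there are a successor `v'`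
of `v` and `x' ∈ Iᵏ(v')` with `x = x' + w(v,v')`. -/
theorem stmt7 {V : Type*} [Fintype V] {d : ℕ} (hd : 1 ≤ d) (G : MWGame V d)
    (le : CostP d → CostP d → Prop) (hle : le = leC ∨ le = leL)
    (k : ℕ) (v : V) (hv1 : v ∈ G.V1) (hvF : v ∉ G.F)
    (x : CostP d) (hx : x ∈ G.Iset le (k + 1) v) :
    ∃ v', G.E v v' ∧ ∃ x' ∈ G.Iset le k v',
      x = x' + fun i => (G.w v v' i : ℕ∞) :=
  stmt7_general G le hle k v hv1 hvF x hx
end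

section
/- Let G be a d-weighted reachability game and take ≲ to be the componentwise order ≤_C on (ℕ ∪ {∞})^d. For every k ∈ ℕ and every vertex v ∉ F: if v ∈ V₁ then Ensure^{k+1}(v) = ⋃_{v' ∈ succ(v)} (Ensure^k(v') + w(v,v')), and if v ∈ V₂ then Ensure^{k+1}(v) = ⋂_{v' ∈ succ(v)} (Ensure^k(v') + w(v,v')). -/
open Classical

/-! Out of a vertex `v ∉ F`, a play is `v` followed by a play from its second vertex `v'` that
costs `w(v,v')` less and reaches `F` one step earlier, and strategies pass to the game after the
first move by dropping `v` from the histories. So ensuring `x` within `k + 1` steps from `v` amounts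
to ensuring `x - w(v,v')` within `k` steps from `v'`: from the `v'` Player 1 picks if `v ∈ V₁`, and
from every successor `v'` if `v ∈ V₂`, since Player 2 may move anywhere. In the latter case Player 1
glues his strategies from the successors, reading the successor off the history. -/

namespace MWGame

variable {V : Type*} {d : ℕ} (G : MWGame V d)

def edgeCost (v v' : V) : CostP d := fun i => G.w v v' i

def MeetsBound (k : ℕ) (x : CostP d) (ρ : ℕ → V) : Prop :=
  leC (G.cost ρ) x ∧ ∀ h : ∃ ℓ, ρ ℓ ∈ G.F, Nat.find h ≤ k

variable {G}

theorem mem_ensureK_iff {k : ℕ} {v : V} {x : CostP d} :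
    x ∈ G.EnsureK leC k v ↔ ∃ σ₁ : G.Strat1, ∀ σ₂ : G.Strat2, G.MeetsBound k x (G.out σ₁ σ₂ v) :=
  Iff.rfl

theorem mem_addW_iff {X : Set (CostP d)} {v v' : V} {x : CostP d} :
    x ∈ addW X (G.w v v') ↔ ∃ y ∈ X, x = y + G.edgeCost v v' :=
  Iff.rfl

section Plays

variable {ρ : ℕ → V}

theorem exists_mem_F_iff_exists_succ (hρ : ρ 0 ∉ G.F) :
    (∃ ℓ, ρ ℓ ∈ G.F) ↔ ∃ ℓ, ρ (ℓ + 1) ∈ G.F :=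
  ⟨fun ⟨ℓ, hℓ⟩ => by cases ℓ with
    | zero => exact absurd hℓ hρ
    | succ ℓ => exact ⟨ℓ, hℓ⟩,
    fun ⟨ℓ, hℓ⟩ => ⟨ℓ + 1, hℓ⟩⟩

theorem cost_eq_edgeCost_add_cost_tail (hρ : ρ 0 ∉ G.F) :
    G.cost ρ = G.edgeCost (ρ 0) (ρ 1) + G.cost (fun n => ρ (n + 1)) := by
  by_cases htail : ∃ ℓ, ρ (ℓ + 1) ∈ G.F
  · have hreach := (exists_mem_F_iff_exists_succ hρ).2 htail
    funext i
    rw [cost, cost, dif_pos hreach, dif_pos htail, Nat.find_comp_succ hreach htail hρ,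
      Finset.sum_range_succ']
    exact add_comm _ _
  · have hreach := mt (exists_mem_F_iff_exists_succ hρ).1 htail
    rw [cost, cost, dif_neg hreach, dif_neg htail]
    funext i
    exact (add_top (G.edgeCost (ρ 0) (ρ 1) i)).symm

theorem meetsBound_succ_iff (hρ : ρ 0 ∉ G.F) {k : ℕ} {y : CostP d} :
    G.MeetsBound (k + 1) (y + G.edgeCost (ρ 0) (ρ 1)) ρ ↔
      G.MeetsBound k y (fun n => ρ (n + 1)) := by
  have hreach := exists_mem_F_iff_exists_succ hρ
  refine and_congr ?_ ⟨fun h h' => ?_, fun h h' => ?_⟩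
  · simp only [leC, cost_eq_edgeCost_add_cost_tail hρ, Pi.le_def, Pi.add_apply]
    refine forall_congr' fun i => ?_
    rw [add_comm (y i)]
    exact ENat.add_le_add_iff_left (ENat.natCast_ne_top _)
  · simpa [Nat.find_comp_succ (hreach.2 h') h' hρ] using h (hreach.2 h')
  · simpa [Nat.find_comp_succ h' (hreach.1 h') hρ] using h (hreach.1 h')

theorem edgeCost_le_of_meetsBound (hρ : ρ 0 ∉ G.F) {k : ℕ} {x : CostP d}
    (h : G.MeetsBound k x ρ) : G.edgeCost (ρ 0) (ρ 1) ≤ x :=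
  (cost_eq_edgeCost_add_cost_tail hρ ▸ le_self_add).trans h.1

end Plays

section Strategies

noncomputable def prependMove (v v' : V) (σ : List V → V → V) : List V → V → V
  | [], u => if u = v then v' else σ [] u
  | _ :: t, u => σ t u

theorem prependMove_valid {P : V → Prop} {v v' : V} (hE : G.E v v') {σ : List V → V → V}
    (hσ : ∀ t u, P u → G.E u (σ t u)) : ∀ t u, P u → G.E u (prependMove v v' σ t u)
  | [], u, hu => by
    by_cases huv : u = v
    · subst huv
      simpa [prependMove] using hE
    · simpa [prependMove, huv] using hσ [] u hu
  | _ :: t, u, hu => hσ t u hu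

noncomputable def Strat1.prepend {v v' : V} (hE : G.E v v') (σ : G.Strat1) : G.Strat1 :=
  ⟨prependMove v v' σ.1, prependMove_valid hE σ.2⟩

noncomputable def Strat2.prepend {v v' : V} (hE : G.E v v') (σ : G.Strat2) : G.Strat2 :=
  ⟨prependMove v v' σ.1, prependMove_valid hE σ.2⟩

def Strat1.tail (v : V) (σ : G.Strat1) : G.Strat1 :=
  ⟨fun t u => σ.1 (v :: t) u, fun t u => σ.2 (v :: t) u⟩

def Strat2.tail (v : V) (σ : G.Strat2) : G.Strat2 :=
  ⟨fun t u => σ.1 (v :: t) u, fun t u => σ.2 (v :: t) u⟩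

noncomputable instance : Inhabited G.Strat1 :=
  ⟨⟨fun _ u => (G.succ_nonempty u).choose, fun _ u _ => (G.succ_nonempty u).choose_spec⟩⟩

noncomputable instance : Inhabited G.Strat2 :=
  ⟨⟨fun _ u => (G.succ_nonempty u).choose, fun _ u _ => (G.succ_nonempty u).choose_spec⟩⟩

end Strategies

section Outcomes

variable (σ₁ : G.Strat1) (σ₂ : G.Strat2) (v : V)

theorem out_zero : G.out σ₁ σ₂ v 0 = v := rfl

theorem out_one : G.out σ₁ σ₂ v 1 = if v ∈ G.V1 then σ₁.1 [] v else σ₂.1 [] v := rfl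

theorem outAux_succ_eq_cons (n : ℕ) :
    G.outAux σ₁ σ₂ v (n + 1) =
      (v :: (G.outAux (σ₁.tail v) (σ₂.tail v) (G.out σ₁ σ₂ v 1) n).1,
        (G.outAux (σ₁.tail v) (σ₂.tail v) (G.out σ₁ σ₂ v 1) n).2) := by
  induction n with
  | zero => rfl
  | succ n ih => rw [outAux, ih]; rfl

theorem out_succ_eq_out_tail :
    (fun n => G.out σ₁ σ₂ v (n + 1)) = G.out (σ₁.tail v) (σ₂.tail v) (G.out σ₁ σ₂ v 1) :=
  funext fun n => by rw [out, out, outAux_succ_eq_cons]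

/-- The history `(t, u)` starts at `t.headD u`. -/
theorem outAux_root (n : ℕ) : (G.outAux σ₁ σ₂ v n).1.headD (G.outAux σ₁ σ₂ v n).2 = v := by
  cases n with
  | zero => rfl
  | succ n => rw [outAux_succ_eq_cons]; rfl

theorem out_congr_of_eq_on_root {τ₁ : G.Strat1}
    (h : ∀ t u, t.headD u = v → σ₁.1 t u = τ₁.1 t u) :
    G.out σ₁ σ₂ v = G.out τ₁ σ₂ v := by
  suffices ∀ n, G.outAux σ₁ σ₂ v n = G.outAux τ₁ σ₂ v n from funext fun n => by
    rw [out, out, this]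
  intro n
  induction n with
  | zero => rfl
  | succ n ih => rw [outAux, outAux, ← ih, h _ _ (outAux_root σ₁ σ₂ v n)]

theorem meetsBound_out_iff {v' : V} (hvF : v ∉ G.F) (hmove : G.out σ₁ σ₂ v 1 = v') {k : ℕ}
    {y : CostP d} :
    G.MeetsBound (k + 1) (y + G.edgeCost v v') (G.out σ₁ σ₂ v) ↔
      G.MeetsBound k y (G.out (σ₁.tail v) (σ₂.tail v) v') := by
  subst hmove
  rw [← out_succ_eq_out_tail]
  exact meetsBound_succ_iff hvF

end Outcomes

section Ensure

variable {k : ℕ} {v v' : V} {x : CostP d}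

theorem mem_addW_ensureK_of_forall_meetsBound_succ (hvF : v ∉ G.F) (hE : G.E v v')
    {σ₁ : G.Strat1} (hσ₁ : ∀ σ₂, G.MeetsBound (k + 1) x (G.out σ₁ σ₂ v))
    (hfirst : v ∈ G.V1 → σ₁.1 [] v = v') :
    x ∈ addW (G.EnsureK leC k v') (G.w v v') := by
  have hmove : ∀ σ₂ : G.Strat2, G.out σ₁ (σ₂.prepend hE) v 1 = v' := by
    intro σ₂
    rw [out_one]
    split_ifs with hv
    · exact hfirst hv
    · simp [Strat2.prepend, prependMove]
  have hle : G.edgeCost v v' ≤ x := by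
    have h := edgeCost_le_of_meetsBound hvF (hσ₁ ((default : G.Strat2).prepend hE))
    rwa [out_zero, hmove] at h
  refine mem_addW_iff.2
    ⟨x - G.edgeCost v v', ⟨σ₁.tail v, fun σ₂ => ?_⟩, (tsub_add_cancel_of_le hle).symm⟩
  have h := hσ₁ (σ₂.prepend hE)
  rw [← tsub_add_cancel_of_le hle, meetsBound_out_iff _ _ _ hvF (hmove σ₂)] at h
  exact h

theorem mem_ensureK_succ_of_mem_addW (hvF : v ∉ G.F) (hv : v ∈ G.V1) (hE : G.E v v')
    (hx : x ∈ addW (G.EnsureK leC k v') (G.w v v')) : x ∈ G.EnsureK leC (k + 1) v := by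
  obtain ⟨y, ⟨σ, hσ⟩, rfl⟩ := mem_addW_iff.1 hx
  refine ⟨σ.prepend hE, fun σ₂ => ?_⟩
  have hmove : G.out (σ.prepend hE) σ₂ v 1 = v' := by
    rw [out_one, if_pos hv]
    simp [Strat1.prepend, prependMove]
  exact (meetsBound_out_iff _ _ _ hvF hmove).2 (hσ (σ₂.tail v))

theorem mem_ensureK_succ_of_forall_mem_addW (hvF : v ∉ G.F) (hv : v ∉ G.V1)
    (hx : ∀ v', G.E v v' → x ∈ addW (G.EnsureK leC k v') (G.w v v')) :
    x ∈ G.EnsureK leC (k + 1) v := by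
  simp only [mem_addW_iff, mem_ensureK_iff] at hx
  choose! y hy hxy using hx
  choose! σ hσ using hy
  let glued : G.Strat1 := ⟨fun t u => (σ (t.headD u)).1 t u, fun t u => (σ (t.headD u)).2 t u⟩
  obtain ⟨v₀, hv₀⟩ := G.succ_nonempty v
  refine ⟨glued.prepend hv₀, fun σ₂ => ?_⟩
  have hmove : G.out (glued.prepend hv₀) σ₂ v 1 = σ₂.1 [] v := by simp [out_one, hv]
  have hE : G.E v (σ₂.1 [] v) := σ₂.2 [] v hv
  rw [hxy _ hE]
  refine (meetsBound_out_iff _ _ _ hvF hmove).2 ?_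
  rw [out_congr_of_eq_on_root _ _ _ (τ₁ := σ (σ₂.1 [] v)) fun t u h => by
    change (σ (t.headD u)).1 t u = _
    rw [h]]
  exact hσ _ hE _

end Ensure

end MWGame

theorem stmt9_general {V : Type*} {d : ℕ} (G : MWGame V d)
    (k : ℕ) (v : V) (hvF : v ∉ G.F) :
    (v ∈ G.V1 →
      G.EnsureK leC (k + 1) v =
        ⋃ v' ∈ { u | G.E v u }, addW (G.EnsureK leC k v') (G.w v v')) ∧
    (v ∉ G.V1 →
      G.EnsureK leC (k + 1) v =
        ⋂ v' ∈ { u | G.E v u }, addW (G.EnsureK leC k v') (G.w v v')) := by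
  refine ⟨fun hv => Set.ext fun x => ⟨?_, ?_⟩, fun hv => Set.ext fun x => ⟨?_, ?_⟩⟩
  · rintro ⟨σ₁, hσ₁⟩
    exact Set.mem_iUnion₂.2 ⟨_, σ₁.2 [] v hv,
      MWGame.mem_addW_ensureK_of_forall_meetsBound_succ hvF (σ₁.2 [] v hv) hσ₁ fun _ => rfl⟩
  · intro hx
    obtain ⟨v', hE, hx⟩ := Set.mem_iUnion₂.1 hx
    exact MWGame.mem_ensureK_succ_of_mem_addW hvF hv hE hx
  · rintro ⟨σ₁, hσ₁⟩
    exact Set.mem_iInter₂.2 fun v' hE =>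
      MWGame.mem_addW_ensureK_of_forall_meetsBound_succ hvF hE hσ₁ (absurd · hv)
  · exact fun hx => MWGame.mem_ensureK_succ_of_forall_mem_addW hvF hv (Set.mem_iInter₂.1 hx)

/-- For the componentwise order, for `v ∉ F`: if `v ∈ V₁` then
`Ensure^{k+1}(v) = ⋃_{v' ∈ succ(v)} (Ensure^k(v') + w(v,v'))`, and if `v ∈ V₂` then
`Ensure^{k+1}(v) = ⋂_{v' ∈ succ(v)} (Ensure^k(v') + w(v,v'))`. -/
theorem stmt9 {V : Type*} [Fintype V] {d : ℕ} (hd : 1 ≤ d) (G : MWGame V d)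
    (k : ℕ) (v : V) (hvF : v ∉ G.F) :
    (v ∈ G.V1 →
      G.EnsureK leC (k + 1) v =
        ⋃ v' ∈ { u | G.E v u }, addW (G.EnsureK leC k v') (G.w v v')) ∧
    (v ∉ G.V1 →
      G.EnsureK leC (k + 1) v =
        ⋂ v' ∈ { u | G.E v u }, addW (G.EnsureK leC k v') (G.w v v')) :=
  stmt9_general G k v hvF
end

section
/- Let G be a d-weighted reachability game and let ≲ be either the componentwise order ≤_C or the lexicographic order ≤_L on (ℕ ∪ {∞})^d, with the sets Iᵏ taken with respect to ≲. For y ∈ (ℕ ∪ {∞})^d and a vertex u, let firstOcc(y,u) denote the least n with y ∈ Iⁿ(u) (when such n exists). Then for every v ∈ V₂ \ F, every x ∈ I^{|V|}(v) with x ≠ (∞,…,∞), every successor v' of v and every x' ∈ I^{|V|}(v') such that x' + w(v,v') ≤_L x, either x' <_L x or firstOcc(x',v') < firstOcc(x,v), where ≤_L denotes the lexicographic order and <_L its strict version. -/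
/-!
Since `x' ≤_L x' + w(v,v') ≤_L x`, the only case left is `x' = x` with `x + w(v,v') = x`.
If `x` first appears in `Iᵏ⁺¹(v)`, then `x = t + w(v,v')` with `t` above some `z ∈ Iᵏ(v')`;
cancelling the finite weight gives `t = x`. The sets `↑Iⁿ(v')` increase with `n` and each
`Iⁿ(v')` is an antichain, so `z ≤ x` with `x ∈ I^{|V|}(v')` forces `z = x`: hence `x`
already lies in `Iᵏ(v')`.
-/

open Classical

section CostOrder

variable {d : ℕ}

theorem ltL_wellFounded : WellFounded (@ltL d) :=
  (Pi.Lex.wellFoundedLT (ι := Fin d) (α := fun _ => ℕ∞)).wf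

theorem ltL_trans {x y z : CostP d} (hxy : ltL x y) (hyz : ltL y z) : ltL x z :=
  lt_trans (a := toLex x) (b := toLex y) (c := toLex z) hxy hyz

theorem ltL_irrefl (x : CostP d) : ¬ ltL x x :=
  lt_irrefl (toLex x)

theorem ltL_of_lt {x y : CostP d} (h : x < y) : ltL x y :=
  Pi.lex_lt_of_lt wellFounded_lt h

theorem leL_of_le {x y : CostP d} (h : x ≤ y) : leL x y :=
  (eq_or_ne x y).imp_right fun hne => ltL_of_lt (lt_of_le_of_ne h hne)

/-- Via `ltL_wellFounded`, the last field is what makes minimal elements exist. -/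
structure IsCostOrder (le : CostP d → CostP d → Prop) : Prop where
  refl : ∀ x, le x x
  trans : ∀ {x y z}, le x y → le y z → le x z
  le_top : ∀ x, le x ⊤
  ltL_of_le_of_ne : ∀ {x y}, le x y → x ≠ y → ltL x y

theorem isCostOrder_leC : IsCostOrder (@leC d) where
  refl := le_refl
  trans := le_trans
  le_top _ := le_top
  ltL_of_le_of_ne h hne := ltL_of_lt (lt_of_le_of_ne h hne)

theorem isCostOrder_leL : IsCostOrder (@leL d) where
  refl _ := Or.inl rfl
  trans := by
    rintro x y z (rfl | hxy) (rfl | hyz)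
    exacts [Or.inl rfl, Or.inr hyz, Or.inr hxy, Or.inr (ltL_trans hxy hyz)]
  le_top x := leL_of_le le_top
  ltL_of_le_of_ne h hne := h.resolve_left hne

namespace IsCostOrder

variable {le : CostP d → CostP d → Prop} (hle : IsCostOrder le)
include hle

theorem antisymm {x y : CostP d} (hxy : le x y) (hyx : le y x) : x = y := by
  by_contra hne
  exact ltL_irrefl x
    (ltL_trans (hle.ltL_of_le_of_ne hxy hne) (hle.ltL_of_le_of_ne hyx (Ne.symm hne)))

theorem exists_mem_minimalSet_le {X : Set (CostP d)} {x : CostP d} (hx : x ∈ X) :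
    ∃ m ∈ minimalSet le X, le m x := by
  obtain ⟨m, ⟨hmX, hmx⟩, hmin⟩ :=
    ltL_wellFounded.has_min {z | z ∈ X ∧ le z x} ⟨x, hx, hle.refl x⟩
  refine ⟨m, ⟨hmX, fun y hy hym => ?_⟩, hmx⟩
  by_contra hne
  exact hmin y ⟨hy, hle.trans hym hmx⟩ (hle.ltL_of_le_of_ne hym hne)

theorem subset_upSet (X : Set (CostP d)) : X ⊆ upSet le X :=
  fun x hx => ⟨x, hx, hle.refl x⟩

theorem upSet_minimalSet (X : Set (CostP d)) : upSet le (minimalSet le X) = upSet le X := by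
  ext z
  constructor
  · rintro ⟨x, hx, hxz⟩
    exact ⟨x, hx.1, hxz⟩
  · rintro ⟨x, hx, hxz⟩
    obtain ⟨m, hm, hmx⟩ := hle.exists_mem_minimalSet_le hx
    exact ⟨m, hm, hle.trans hmx hxz⟩

end IsCostOrder

theorem upSet_mono {α : Type*} (le : α → α → Prop) {X Y : Set α} (h : X ⊆ Y) :
    upSet le X ⊆ upSet le Y :=
  fun _ ⟨x, hx, hxz⟩ => ⟨x, h hx, hxz⟩

theorem isAntichain_minimalSet {α : Type*} (le : α → α → Prop) (X : Set α) :
    IsAntichain le (minimalSet le X) :=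
  fun _ hx _ hy hne hxy => hne (hy.2 _ hx.1 hxy)

theorem addW_mono {X Y : Set (CostP d)} (h : X ⊆ Y) (c : Fin d → ℕ) : addW X c ⊆ addW Y c :=
  fun _ ⟨x, hx, hz⟩ => ⟨x, h hx, hz⟩

theorem top_mem_addW {X : Set (CostP d)} (hX : ⊤ ∈ X) (c : Fin d → ℕ) : ⊤ ∈ addW X c :=
  ⟨⊤, hX, funext fun _ => (top_add _).symm⟩

theorem eq_of_add_natCast_eq {x y : CostP d} {c : Fin d → ℕ}
    (h : (x + fun i => (c i : ℕ∞)) = y + fun i => (c i : ℕ∞)) : x = y :=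
  funext fun i => WithTop.add_right_cancel WithTop.coe_ne_top (congrFun h i)

end CostOrder

namespace MWGame

variable {V : Type*} {d : ℕ} (G : MWGame V d) (le : CostP d → CostP d → Prop)

def stepSet (k : ℕ) (u : V) : Set (CostP d) :=
  if u ∈ G.V1 then ⋃ u' ∈ { w | G.E u w }, addW (upSet le (G.Iset le k u')) (G.w u u')
  else ⋂ u' ∈ { w | G.E u w }, addW (upSet le (G.Iset le k u')) (G.w u u')

variable {G le}

theorem Iset_of_mem_F {u : V} (hF : u ∈ G.F) (k : ℕ) : G.Iset le k u = {0} := by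
  cases k <;> simp [Iset, hF]

theorem Iset_zero_of_notMem_F {u : V} (hF : u ∉ G.F) : G.Iset le 0 u = {⊤} := by
  simp [Iset, hF]

theorem Iset_succ_of_notMem_F {u : V} (hF : u ∉ G.F) (k : ℕ) :
    G.Iset le (k + 1) u = minimalSet le (G.stepSet le k u) := by
  rw [Iset, if_neg hF, stepSet, apply_ite (minimalSet le)]

theorem isAntichain_Iset (k : ℕ) (u : V) : IsAntichain le (G.Iset le k u) := by
  by_cases hF : u ∈ G.F
  · rw [Iset_of_mem_F hF]
    exact Set.subsingleton_singleton.isAntichain le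
  cases k with
  | zero =>
    rw [Iset_zero_of_notMem_F hF]
    exact Set.subsingleton_singleton.isAntichain le
  | succ k =>
    rw [Iset_succ_of_notMem_F hF]
    exact isAntichain_minimalSet le _

theorem stepSet_mono {k l : ℕ} (u : V)
    (h : ∀ u', upSet le (G.Iset le k u') ⊆ upSet le (G.Iset le l u')) :
    G.stepSet le k u ⊆ G.stepSet le l u := by
  unfold stepSet
  split_ifs
  · exact Set.biUnion_mono subset_rfl fun u' _ => addW_mono (h u') _
  · exact Set.biInter_mono subset_rfl fun u' _ => addW_mono (h u') _

theorem top_mem_stepSet_zero (hle : IsCostOrder le) (u : V) : ⊤ ∈ G.stepSet le 0 u := by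
  have htop : ∀ u', ⊤ ∈ addW (upSet le (G.Iset le 0 u')) (G.w u u') := by
    intro u'
    refine top_mem_addW ?_ _
    by_cases hF : u' ∈ G.F
    · exact ⟨0, by simp [Iset, hF], hle.le_top 0⟩
    · exact ⟨⊤, by simp [Iset, hF], hle.refl ⊤⟩
  unfold stepSet
  split_ifs
  · obtain ⟨u', hu'⟩ := G.succ_nonempty u
    exact Set.mem_biUnion hu' (htop u')
  · exact Set.mem_iInter₂.mpr fun u' _ => htop u'

theorem upSet_Iset_subset_succ (hle : IsCostOrder le) (k : ℕ) (u : V) :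
    upSet le (G.Iset le k u) ⊆ upSet le (G.Iset le (k + 1) u) := by
  induction k generalizing u with
  | zero =>
    by_cases hF : u ∈ G.F
    · rw [Iset_of_mem_F hF, Iset_of_mem_F hF]
    rintro y ⟨e, he, hey⟩
    rw [Iset_zero_of_notMem_F hF] at he
    subst he
    obtain ⟨m, hm, -⟩ := hle.exists_mem_minimalSet_le (G.top_mem_stepSet_zero hle u)
    rw [Iset_succ_of_notMem_F hF]
    exact ⟨m, hm, hle.trans (hle.le_top m) hey⟩
  | succ k ih =>
    by_cases hF : u ∈ G.F
    · rw [Iset_of_mem_F hF, Iset_of_mem_F hF]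
    rw [Iset_succ_of_notMem_F hF, Iset_succ_of_notMem_F hF, hle.upSet_minimalSet,
      hle.upSet_minimalSet]
    exact upSet_mono le (stepSet_mono u ih)

theorem monotone_upSet_Iset (hle : IsCostOrder le) (u : V) :
    Monotone fun k => upSet le (G.Iset le k u) :=
  monotone_nat_of_le_succ fun k => upSet_Iset_subset_succ hle k u

theorem eq_of_le_of_mem_Iset (hle : IsCostOrder le) {u : V} {k n : ℕ} (hkn : k ≤ n)
    {z x : CostP d} (hz : z ∈ G.Iset le k u) (hx : x ∈ G.Iset le n u) (hzx : le z x) :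
    z = x := by
  obtain ⟨y, hy, hyz⟩ := monotone_upSet_Iset hle u hkn (hle.subset_upSet _ hz)
  have hyx : y = x := (isAntichain_Iset n u).eq hy hx (hle.trans hyz hzx)
  exact hle.antisymm hzx (hyx ▸ hyz)

theorem mem_addW_of_mem_Iset_succ {v v' : V} (hv2 : v ∉ G.V1) (hvF : v ∉ G.F) (hE : G.E v v')
    {k : ℕ} {x : CostP d} (hx : x ∈ G.Iset le (k + 1) v) :
    x ∈ addW (upSet le (G.Iset le k v')) (G.w v v') := by
  rw [Iset_succ_of_notMem_F hvF, stepSet, if_neg hv2] at hx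
  exact Set.mem_iInter₂.mp hx.1 v' hE

theorem mem_Iset_of_add_eq_self (hle : IsCostOrder le) {v v' : V} (hv2 : v ∉ G.V1)
    (hvF : v ∉ G.F) (hE : G.E v v') {k n : ℕ} (hkn : k ≤ n) {x : CostP d}
    (hx : x ∈ G.Iset le (k + 1) v) (hx' : x ∈ G.Iset le n v')
    (hfix : (x + fun i => (G.w v v' i : ℕ∞)) = x) :
    x ∈ G.Iset le k v' := by
  obtain ⟨t, ⟨z, hz, hzt⟩, hxt⟩ := mem_addW_of_mem_Iset_succ hv2 hvF hE hx
  have htx : t = x := eq_of_add_natCast_eq (hxt.symm.trans hfix.symm)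
  rwa [← eq_of_le_of_mem_Iset hle hkn hz hx' (htx ▸ hzt)]

end MWGame

theorem stmt15_general {V : Type*} [Fintype V] {d : ℕ} (G : MWGame V d)
    (le : CostP d → CostP d → Prop) (hle : le = leC ∨ le = leL)
    (v : V) (hv2 : v ∉ G.V1) (hvF : v ∉ G.F)
    (x : CostP d) (hx : x ∈ G.Iset le (Fintype.card V) v) (hxne : x ≠ ⊤)
    (v' : V) (hE : G.E v v')
    (x' : CostP d) (hx' : x' ∈ G.Iset le (Fintype.card V) v')
    (hlex : leL (x' + fun i => (G.w v v' i : ℕ∞)) x) :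
    ltL x' x ∨
      Nat.find (⟨Fintype.card V, hx'⟩ : ∃ n, x' ∈ G.Iset le n v') <
        Nat.find (⟨Fintype.card V, hx⟩ : ∃ n, x ∈ G.Iset le n v) := by
  have hord : IsCostOrder le := by
    rcases hle with rfl | rfl
    exacts [isCostOrder_leC, isCostOrder_leL]
  have hadd : leL x' (x' + fun i => (G.w v v' i : ℕ∞)) := leL_of_le le_self_add
  rcases isCostOrder_leL.trans hadd hlex with rfl | hlt
  · right
    have hfix := isCostOrder_leL.antisymm hlex hadd
    have hfirst := Nat.find_spec (⟨Fintype.card V, hx⟩ : ∃ n, x' ∈ G.Iset le n v)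
    have hpos : Nat.find (⟨Fintype.card V, hx⟩ : ∃ n, x' ∈ G.Iset le n v) ≠ 0 := by
      intro h0
      rw [h0, MWGame.Iset_zero_of_notMem_F hvF] at hfirst
      exact hxne hfirst
    obtain ⟨k, hk⟩ := Nat.exists_eq_succ_of_ne_zero hpos
    have hkN : k ≤ Fintype.card V := Nat.le_of_succ_le (hk ▸ Nat.find_le hx)
    rw [hk] at hfirst ⊢
    exact Nat.lt_succ_of_le (Nat.find_le (MWGame.mem_Iset_of_add_eq_self hord hv2 hvF hE hkN
      hfirst hx' hfix))
  · exact Or.inl hlt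

/-- For `v ∈ V₂ \\ F`, a finite `x ∈ I^{|V|}(v)`, a successor `v'` of
`v` and `x' ∈ I^{|V|}(v')` with `x' + w(v,v') ≤_L x`, either `x' <_L x` or the first
occurrence index of `x'` at `v'` is smaller than that of `x` at `v`. -/
theorem stmt15 {V : Type*} [Fintype V] {d : ℕ} (hd : 1 ≤ d) (G : MWGame V d)
    (le : CostP d → CostP d → Prop) (hle : le = leC ∨ le = leL)
    (v : V) (hv2 : v ∉ G.V1) (hvF : v ∉ G.F)
    (x : CostP d) (hx : x ∈ G.Iset le (Fintype.card V) v) (hxne : x ≠ ⊤)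
    (v' : V) (hE : G.E v v')
    (x' : CostP d) (hx' : x' ∈ G.Iset le (Fintype.card V) v')
    (hlex : leL (x' + fun i => (G.w v v' i : ℕ∞)) x) :
    ltL x' x ∨
      Nat.find (⟨Fintype.card V, hx'⟩ : ∃ n, x' ∈ G.Iset le n v') <
        Nat.find (⟨Fintype.card V, hx⟩ : ∃ n, x ∈ G.Iset le n v) :=
  stmt15_general G le hle v hv2 hvF x hx hxne v' hE x' hx' hlex
end
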